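/- Let λ > 0, D > 0, let Ω ⊆ ℝⁿ be a measurable set, let d : Ω → ℝ be measurable with 0 ≤ d(x) ≤ D for all x ∈ Ω, and let f : Ω → ℝ be measurable. Then for every η > 0 there exists s₁ ≥ 0 such that for all s ≥ s₁, ∫_{(a,b)} ∫_Ω |f(x)|² exp(2s(e^{λd(x)} − e^{2λD}) h(t)) dx dt ≤ η · ∫_Ω |f(x)|² exp(2s(e^{λd(x)} − e^{2λD}) h(t₀)) dx (Lebesgue integrals of nonnegative functions). This is the paper's claim that ∫∫ |f|² e^{2sα} dx dt = o(1) · ∫ |f|² e^{2sα(·,t₀)} dx as s → +∞. -/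

import Mathlib

/-!
Write `c(x) = e^{λ d(x)} - e^{2λD}`; on `Ω` it stays below `-m` with
`m = e^{2λD} - e^{λD} > 0`. The weight `h` is minimal at the midpoint `t₀`, since
`(t₀ - a)(b - t₀) = (t - a)(b - t) + (t - t₀)²`. Splitting `h t = h t₀ + (h t - h t₀)` in the
exponent therefore bounds the inner integral at time `t` by `e^{-2sm(h t - h t₀)}` times the
integral at time `t₀`, and `∫ₐᵇ e^{-2sm(h t - h t₀)} dt → 0` as `s → ∞` by dominated
convergence, because `h t > h t₀` for almost every `t`.
-/

open MeasureTheory Filter Topology Set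

theorem tendsto_lintegral_ofReal_exp_neg_mul_atTop {α : Type*} [MeasurableSpace α]
    {μ : Measure α} [IsFiniteMeasure μ] {g : α → ℝ} (hg : AEMeasurable g μ)
    (hg_pos : ∀ᵐ t ∂μ, 0 < g t) :
    Tendsto (fun s : ℝ => ∫⁻ t, ENNReal.ofReal (Real.exp (-(s * g t))) ∂μ) atTop (𝓝 0) := by
  rw [← lintegral_zero]
  refine tendsto_lintegral_filter_of_dominated_convergence' (fun _ => 1)
    (Eventually.of_forall fun s => by fun_prop) ?_ (by simp) ?_
  · filter_upwards [eventually_ge_atTop 0] with s hs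
    filter_upwards [hg_pos] with t ht
    rw [← ENNReal.ofReal_one]
    exact ENNReal.ofReal_le_ofReal (Real.exp_le_one_iff.2 (by nlinarith))
  · filter_upwards [hg_pos] with t ht
    have hexp : Tendsto (fun s : ℝ => Real.exp (-(s * g t))) atTop (𝓝 0) :=
      Real.tendsto_exp_atBot.comp (tendsto_neg_atTop_atBot.comp (tendsto_id.atTop_mul_const ht))
    simpa using ENNReal.tendsto_ofReal hexp

theorem exp_mul_le_exp_neg_mul_mul_exp {s c m u v : ℝ} (hs : 0 ≤ s) (hc : c ≤ -m)
    (huv : u ≤ v) :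
    Real.exp (s * c * v) ≤ Real.exp (-(s * (m * (v - u)))) * Real.exp (s * c * u) := by
  rw [← Real.exp_add]
  exact Real.exp_le_exp.2 (by nlinarith [mul_nonneg hs (sub_nonneg.2 huv)])

theorem setLIntegral_ofReal_mul_exp_le {X : Type*} [MeasurableSpace X] {μ : Measure X}
    {Ω : Set X} (hΩ : MeasurableSet Ω) {g c : X → ℝ} {m : ℝ} (hc : ∀ x ∈ Ω, c x ≤ -m)
    {s u v : ℝ} (hs : 0 ≤ s) (huv : u ≤ v) :
    ∫⁻ x in Ω, ENNReal.ofReal (g x * Real.exp (s * c x * v)) ∂μ ≤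
      ENNReal.ofReal (Real.exp (-(s * (m * (v - u))))) *
        ∫⁻ x in Ω, ENNReal.ofReal (g x * Real.exp (s * c x * u)) ∂μ := by
  rw [← lintegral_const_mul' _ _ ENNReal.ofReal_ne_top]
  refine setLIntegral_mono' hΩ fun x hx => ?_
  rw [ENNReal.ofReal_mul' (Real.exp_nonneg _), ENNReal.ofReal_mul' (Real.exp_nonneg _),
    mul_left_comm, ← ENNReal.ofReal_mul (Real.exp_nonneg _)]
  gcongr
  exact exp_mul_le_exp_neg_mul_mul_exp hs (hc x hx) huv

theorem eventually_setLIntegral_setLIntegral_ofReal_mul_exp_le {T X : Type*}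
    [MeasurableSpace T] [MeasurableSpace X] {ν : Measure T} {μ : Measure X} {S : Set T}
    [IsFiniteMeasure (ν.restrict S)] {Ω : Set X} (hΩ : MeasurableSet Ω) {g c : X → ℝ} {m : ℝ}
    (hm : 0 < m) (hc : ∀ x ∈ Ω, c x ≤ -m) {φ : T → ℝ} {t₀ : T} (hφ : Measurable φ)
    (hφ_le : ∀ t ∈ S, φ t₀ ≤ φ t) (hφ_lt : ∀ᵐ t ∂ν.restrict S, φ t₀ < φ t) {η : ℝ}
    (hη : 0 < η) :
    ∀ᶠ s in atTop,
      ∫⁻ t in S, ∫⁻ x in Ω, ENNReal.ofReal (g x * Real.exp (s * c x * φ t)) ∂μ ∂ν ≤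
        ENNReal.ofReal η * ∫⁻ x in Ω, ENNReal.ofReal (g x * Real.exp (s * c x * φ t₀)) ∂μ := by
  have hdecay := tendsto_lintegral_ofReal_exp_neg_mul_atTop (μ := ν.restrict S)
    (g := fun t => m * (φ t - φ t₀)) (by fun_prop)
    (hφ_lt.mono fun t ht => mul_pos hm (sub_pos.2 ht))
  filter_upwards [hdecay.eventually_lt_const (ENNReal.ofReal_pos.2 hη), eventually_ge_atTop 0]
    with s hsη hs
  calc _ ≤ ∫⁻ t in S, ENNReal.ofReal (Real.exp (-(s * (m * (φ t - φ t₀))))) *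
          ∫⁻ x in Ω, ENNReal.ofReal (g x * Real.exp (s * c x * φ t₀)) ∂μ ∂ν :=
        setLIntegral_mono (by fun_prop) fun t ht =>
          setLIntegral_ofReal_mul_exp_le hΩ hc hs (hφ_le t ht)
    _ = (∫⁻ t in S, ENNReal.ofReal (Real.exp (-(s * (m * (φ t - φ t₀))))) ∂ν) *
          ∫⁻ x in Ω, ENNReal.ofReal (g x * Real.exp (s * c x * φ t₀)) ∂μ :=
        lintegral_mul_const _ (by fun_prop)
    _ ≤ _ := by gcongr

theorem inv_sqrt_mul_sub_midpoint_le {a b t : ℝ} (ht : t ∈ Ioo a b) :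
    (√(((a + b) / 2 - a) * (b - (a + b) / 2)))⁻¹ ≤ (√((t - a) * (b - t)))⁻¹ := by
  have hpos : 0 < (t - a) * (b - t) := mul_pos (sub_pos.2 ht.1) (sub_pos.2 ht.2)
  refine inv_anti₀ (Real.sqrt_pos.2 hpos) (Real.sqrt_le_sqrt ?_)
  nlinarith [sq_nonneg (t - (a + b) / 2)]

theorem inv_sqrt_mul_sub_midpoint_lt {a b t : ℝ} (ht : t ∈ Ioo a b) (hne : t ≠ (a + b) / 2) :
    (√(((a + b) / 2 - a) * (b - (a + b) / 2)))⁻¹ < (√((t - a) * (b - t)))⁻¹ := by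
  have hpos : 0 < (t - a) * (b - t) := mul_pos (sub_pos.2 ht.1) (sub_pos.2 ht.2)
  refine inv_strictAnti₀ (Real.sqrt_pos.2 hpos) (Real.sqrt_lt_sqrt hpos.le ?_)
  nlinarith [sq_pos_of_ne_zero (sub_ne_zero.2 hne)]

theorem weight_space_time_integral_small_general (n : ℕ) (a b t₀ : ℝ)
    (ht₀ : t₀ = (a + b) / 2)
    (h : ℝ → ℝ) (hh : ∀ t, h t = (Real.sqrt ((t - a) * (b - t)))⁻¹)
    (lam D : ℝ) (hlam : 0 < lam) (hD : 0 < D)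
    (Ω : Set (Fin n → ℝ)) (hΩ : MeasurableSet Ω)
    (d : (Fin n → ℝ) → ℝ) (hdD : ∀ x ∈ Ω, d x ∈ Set.Icc (0 : ℝ) D)
    (f : (Fin n → ℝ) → ℝ) :
    ∀ η > (0 : ℝ), ∃ s₁ ≥ (0 : ℝ), ∀ s ≥ s₁,
      (∫⁻ t in Set.Ioo a b, ∫⁻ x in Ω,
          ENNReal.ofReal (|f x| ^ 2 *
            Real.exp (2 * s * (Real.exp (lam * d x) - Real.exp (2 * lam * D)) * h t))) ≤
        ENNReal.ofReal η *
          ∫⁻ x in Ω,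
            ENNReal.ofReal (|f x| ^ 2 *
              Real.exp (2 * s * (Real.exp (lam * d x) - Real.exp (2 * lam * D)) * h t₀)) := by
  intro η hη
  subst ht₀
  have hm : 0 < Real.exp (2 * lam * D) - Real.exp (lam * D) :=
    sub_pos.2 (Real.exp_lt_exp.2 (by nlinarith))
  have hc : ∀ x ∈ Ω, Real.exp (lam * d x) - Real.exp (2 * lam * D) ≤
      -(Real.exp (2 * lam * D) - Real.exp (lam * D)) := fun x hx => by
    have := Real.exp_le_exp.2 (mul_le_mul_of_nonneg_left (hdD x hx).2 hlam.le)
    linarith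
  have hh_meas : Measurable h := by rw [funext hh]; fun_prop
  have hh_le : ∀ t ∈ Ioo a b, h ((a + b) / 2) ≤ h t := fun t ht => by
    simpa only [hh] using inv_sqrt_mul_sub_midpoint_le ht
  have hh_lt : ∀ᵐ t ∂volume.restrict (Ioo a b), h ((a + b) / 2) < h t := by
    filter_upwards [ae_restrict_mem measurableSet_Ioo,
      ae_restrict_of_ae (compl_mem_ae_iff.2 (measure_singleton ((a + b) / 2)))] with t ht hne
    simpa only [hh] using inv_sqrt_mul_sub_midpoint_lt ht hne
  obtain ⟨s₁, hs₁⟩ := eventually_atTop.1 <| (tendsto_id.const_mul_atTop two_pos).eventually <|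
    eventually_setLIntegral_setLIntegral_ofReal_mul_exp_le hΩ hm hc hh_meas hh_le hh_lt hη
  exact ⟨max s₁ 0, le_max_right _ _, fun s hs => hs₁ s (le_of_max_le_left hs)⟩

/-- Let `a < b`, `t₀ = (a+b)/2`, `h t = ((t-a)(b-t))^(-1/2)`. Let `λ > 0`, `D > 0`,
`Ω ⊆ ℝⁿ` measurable, `d` measurable with `0 ≤ d ≤ D` on `Ω`, `f` measurable. Then for
every `η > 0` there exists `s₁ ≥ 0` such that for all `s ≥ s₁`,
`∫_{(a,b)} ∫_Ω |f|² e^{2sα(x,t)} dx dt ≤ η · ∫_Ω |f|² e^{2sα(x,t₀)} dx`,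
where `α(x,t) = (e^{λd(x)} - e^{2λD}) h(t)`. -/
theorem weight_space_time_integral_small (n : ℕ) (a b τ t₀ : ℝ) (hab : a < b)
    (hτ : τ = (b - a) / 2) (ht₀ : t₀ = (a + b) / 2)
    (h : ℝ → ℝ) (hh : ∀ t, h t = (Real.sqrt ((t - a) * (b - t)))⁻¹)
    (lam D : ℝ) (hlam : 0 < lam) (hD : 0 < D)
    (Ω : Set (Fin n → ℝ)) (hΩ : MeasurableSet Ω)
    (d : (Fin n → ℝ) → ℝ) (hd : Measurable d) (hdD : ∀ x ∈ Ω, d x ∈ Set.Icc (0 : ℝ) D)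
    (f : (Fin n → ℝ) → ℝ) (hf : Measurable f) :
    ∀ η > (0 : ℝ), ∃ s₁ ≥ (0 : ℝ), ∀ s ≥ s₁,
      (∫⁻ t in Set.Ioo a b, ∫⁻ x in Ω,
          ENNReal.ofReal (|f x| ^ 2 *
            Real.exp (2 * s * (Real.exp (lam * d x) - Real.exp (2 * lam * D)) * h t))) ≤
        ENNReal.ofReal η *
          ∫⁻ x in Ω,
            ENNReal.ofReal (|f x| ^ 2 *
              Real.exp (2 * s * (Real.exp (lam * d x) - Real.exp (2 * lam * D)) * h t₀)) :=
  weight_space_time_integral_small_general n a b t₀ ht₀ h hh lam D hlam hD Ω hΩ d hdD f
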